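/- Let D be a proper subdomain of a Banach space with (D, k_D) a (μ₀, ρ₀)-Rips space (with 0 < λ ≤ 1/2 and λ ≤ ρ₀). Let γ₁, γ₂ be λ-curves in D, x ∈ γ₁ ∩ γ₂, y on γ₁ after x, z on γ₂ after x, and suppose k_D(y,z) ≤ τ. Then for every w ∈ γ₁[x,y] there exists u ∈ γ₂[x,z] with k_D(w,u) ≤ μ₀ + 2λ + τ. -/

import Mathlib

open Set Metric MeasureTheory

noncomputable section

variable {E : Type*} [NormedAddCommGroup E]

/-- Distance from a point to the boundary (= complement) of `D`. -/
def dB (D : Set E) (z : E) : ℝ := Metric.infDist z Dᶜ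

/-- `D` is a proper subdomain of the ambient space. -/
def IsProperDomain (D : Set E) : Prop := IsOpen D ∧ IsConnected D ∧ Dᶜ.Nonempty

/-- A rectifiable arc inside `D`, parametrized by arclength on `[a,b]`. -/
structure IsArc (D : Set E) (γ : ℝ → E) (a b : ℝ) : Prop where
  le : a ≤ b
  lip : LipschitzOnWith 1 γ (Set.Icc a b)
  unit : ∀ s t, s ∈ Set.Icc a b → t ∈ Set.Icc a b → s ≤ t →
    eVariationOn γ (Set.Icc s t) = ENNReal.ofReal (t - s)
  mem : ∀ t ∈ Set.Icc a b, γ t ∈ D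

/-- Quasihyperbolic length of the piece on `[a,b]` of an arclength-parametrized arc. -/
def qhLen (D : Set E) (γ : ℝ → E) (a b : ℝ) : ℝ := ∫ t in a..b, 1 / dB D (γ t)

/-- The quasihyperbolic distance in `D`: infimum of quasihyperbolic lengths of
arcs joining the two points. -/
def qhDist (D : Set E) (x y : E) : ℝ :=
  sInf { L : ℝ | ∃ T : ℝ, ∃ γ : ℝ → E,
    IsArc D γ 0 T ∧ γ 0 = x ∧ γ T = y ∧ L = qhLen D γ 0 T }

/-- `γ` is a `c`-quasigeodesic in `D` on `[a,b]`. -/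
def IsQuasigeodesicOn (D : Set E) (c : ℝ) (γ : ℝ → E) (a b : ℝ) : Prop :=
  IsArc D γ a b ∧ ∀ s t, s ∈ Set.Icc a b → t ∈ Set.Icc a b → s ≤ t →
    qhLen D γ s t ≤ c * qhDist D (γ s) (γ t)

/-- The coefficient `c_{x,y}^λ = min (1 + λ/(2 k_D(x,y))) (9/8)`. -/
def cLam (D : Set E) (lam : ℝ) (x y : E) : ℝ :=
  min (1 + lam / (2 * qhDist D x y)) (9 / 8)

/-- `γ` is a `λ`-curve in `D` on `[a,b]`: a `c_{x,y}^λ`-quasigeodesic where `x,y`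
are its endpoints. -/
def IsLamCurve (D : Set E) (lam : ℝ) (γ : ℝ → E) (a b : ℝ) : Prop :=
  IsQuasigeodesicOn D (cLam D lam (γ a) (γ b)) γ a b

/-- `γ` is `h`-short in `D`. -/
def IsShort (D : Set E) (h : ℝ) (γ : ℝ → E) (a b : ℝ) : Prop :=
  IsArc D γ a b ∧ ∀ s t, s ∈ Set.Icc a b → t ∈ Set.Icc a b → s ≤ t →
    qhLen D γ s t ≤ qhDist D (γ s) (γ t) + h

/-- The point `w` lies within quasihyperbolic distance `C` of the union of the
two given sides. -/
def WithinOfSides (D : Set E) (C : ℝ) (w : E) (α : ℝ → E) (a b : ℝ)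
    (α' : ℝ → E) (a' b' : ℝ) : Prop :=
  ∃ s : ℝ, (s ∈ Set.Icc a b ∧ qhDist D w (α s) ≤ C) ∨
    (s ∈ Set.Icc a' b' ∧ qhDist D w (α' s) ≤ C)

/-- `(D, k_D)` is a `(C,h)`-Rips space: every side of an `h`-short triangle lies
in the `C`-neighbourhood of the two other sides. -/
def IsRips (D : Set E) (C h : ℝ) : Prop :=
  ∀ (α₁ α₂ α₃ : ℝ → E) (a₁ b₁ a₂ b₂ a₃ b₃ : ℝ),
    IsShort D h α₁ a₁ b₁ → IsShort D h α₂ a₂ b₂ → IsShort D h α₃ a₃ b₃ →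
    α₁ b₁ = α₂ a₂ → α₂ b₂ = α₃ a₃ → α₃ b₃ = α₁ a₁ →
    (∀ t ∈ Set.Icc a₁ b₁, WithinOfSides D C (α₁ t) α₂ a₂ b₂ α₃ a₃ b₃) ∧
    (∀ t ∈ Set.Icc a₂ b₂, WithinOfSides D C (α₂ t) α₃ a₃ b₃ α₁ a₁ b₁) ∧
    (∀ t ∈ Set.Icc a₃ b₃, WithinOfSides D C (α₃ t) α₁ a₁ b₁ α₂ a₂ b₂)

/-- `D` is `δ`-Gromov hyperbolic with respect to the quasihyperbolic metric. -/
def IsGromovHyp (D : Set E) (δ : ℝ) : Prop :=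
  ∀ x ∈ D, ∀ y ∈ D, ∀ z ∈ D, ∀ p ∈ D,
    min ((qhDist D p x + qhDist D p y - qhDist D x y) / 2)
        ((qhDist D p y + qhDist D p z - qhDist D y z) / 2) - δ ≤
      (qhDist D p x + qhDist D p z - qhDist D x z) / 2

/-- `μ` is a thin-triangles constant for triangles of `c₀`-quasigeodesics in `D`. -/
def ThinTriangles (D : Set E) (c₀ μ : ℝ) : Prop :=
  ∀ (γ₁ γ₂ γ₃ : ℝ → E) (a₁ b₁ a₂ b₂ a₃ b₃ : ℝ),
    IsQuasigeodesicOn D c₀ γ₁ a₁ b₁ → IsQuasigeodesicOn D c₀ γ₂ a₂ b₂ →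
    IsQuasigeodesicOn D c₀ γ₃ a₃ b₃ →
    γ₁ b₁ = γ₂ a₂ → γ₂ b₂ = γ₃ a₃ → γ₃ b₃ = γ₁ a₁ →
    ∀ t ∈ Set.Icc a₁ b₁, WithinOfSides D μ (γ₁ t) γ₂ a₂ b₂ γ₃ a₃ b₃

/-- `D` is a `c`-uniform domain. -/
def IsUniform (D : Set E) (c : ℝ) : Prop :=
  ∀ z₁ ∈ D, ∀ z₂ ∈ D, ∃ γ : ℝ → E, ∃ a b : ℝ, IsArc D γ a b ∧ γ a = z₁ ∧ γ b = z₂ ∧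
    (∀ t ∈ Set.Icc a b, min (t - a) (b - t) ≤ c * dB D (γ t)) ∧
    b - a ≤ c * ‖z₁ - z₂‖

/-- `D` is an `a`-John domain. -/
def IsJohn (D : Set E) (a : ℝ) : Prop :=
  ∀ z₁ ∈ D, ∀ z₂ ∈ D, ∃ γ : ℝ → E, ∃ s t : ℝ, IsArc D γ s t ∧ γ s = z₁ ∧ γ t = z₂ ∧
    ∀ u ∈ Set.Icc s t, min (u - s) (t - u) ≤ a * dB D (γ u)

/-- The inner (length) distance in `D`. -/
def innerDist (D : Set E) (x y : E) : ℝ :=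
  sInf { L : ℝ | ∃ γ : ℝ → E, ∃ s t : ℝ, IsArc D γ s t ∧ γ s = x ∧ γ t = y ∧ L = t - s }

/-- `γ` is an inner `b`-uniform curve in `D`. -/
def IsInnerUniformCurve (D : Set E) (b : ℝ) (γ : ℝ → E) (s t : ℝ) : Prop :=
  (∀ u ∈ Set.Icc s t, min (u - s) (t - u) ≤ b * dB D (γ u)) ∧
  t - s ≤ b * innerDist D (γ s) (γ t)

/-- `D` is an inner `b`-uniform domain. -/
def IsInnerUniform (D : Set E) (b : ℝ) : Prop :=
  ∀ z₁ ∈ D, ∀ z₂ ∈ D, ∃ γ : ℝ → E, ∃ s t : ℝ,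
    IsArc D γ s t ∧ γ s = z₁ ∧ γ t = z₂ ∧ IsInnerUniformCurve D b γ s t

/-- Length (total variation) of a curve on `[a,b]`. -/
def lenOn {F : Type*} [NormedAddCommGroup F] (γ : ℝ → F) (a b : ℝ) : ℝ :=
  (eVariationOn γ (Set.Icc a b)).toReal

variable {F : Type*} [NormedAddCommGroup F]

/-- `f` is a homeomorphism from `D` onto `D'`. -/
def IsHomeoOn (f : E → F) (D : Set E) (D' : Set F) : Prop :=
  ∃ g : F → E, ContinuousOn f D ∧ ContinuousOn g D' ∧ Set.MapsTo f D D' ∧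
    Set.MapsTo g D' D ∧ (∀ x ∈ D, g (f x) = x) ∧ (∀ y ∈ D', f (g y) = y)

/-- `f : D → D'` is `(M,C)`-coarsely quasihyperbolic. -/
def IsCQH (f : E → F) (D : Set E) (D' : Set F) (M C : ℝ) : Prop :=
  ∀ x ∈ D, ∀ y ∈ D,
    (qhDist D x y - C) / M ≤ qhDist D' (f x) (f y) ∧
    qhDist D' (f x) (f y) ≤ M * qhDist D x y + C

/-!
Join `y` to `z` by an arc `α` whose quasihyperbolic length exceeds `k_D(y,z)` by less than `λ`.
An arc whose total length exceeds the distance of its endpoints by at most `ε` is `ε`-short, and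
so is every λ-curve for `ε = λ`. Hence `γ₁[x,y]`, `α` and the reversed `γ₂[x,z]` form a
`ρ₀`-short triangle, and the Rips condition puts `w` within `μ₀` either of `γ₂[x,z]`, or of a
point of `α`, in which case `k_D(w,z) ≤ μ₀ + ℓ_k(α) ≤ μ₀ + τ + λ`.
-/

section

variable {D : Set E} {γ δ : ℝ → E} {a b c s t : ℝ}

lemma eVariationOn_comp_add_right (γ : ℝ → E) (c u v : ℝ) :
    eVariationOn (fun x => γ (x + c)) (Icc u v) = eVariationOn γ (Icc (u + c) (v + c)) := by
  rw [show (fun x => γ (x + c)) = γ ∘ (fun x => x + c) from rfl,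
    eVariationOn.comp_eq_of_monotoneOn γ (fun x => x + c) fun x _ y _ hxy => by simpa using hxy,
    image_add_const_Icc]

lemma eVariationOn_comp_const_sub (γ : ℝ → E) (c u v : ℝ) :
    eVariationOn (fun x => γ (c - x)) (Icc u v) = eVariationOn γ (Icc (c - v) (c - u)) := by
  rw [show (fun x => γ (c - x)) = γ ∘ (fun x => c - x) from rfl,
    eVariationOn.comp_eq_of_antitoneOn γ _ fun x _ y _ hxy => sub_le_sub_left hxy c,
    image_const_sub_Icc]

lemma IsArc.of_eVariationOn (hab : a ≤ b)
    (unit : ∀ s t, s ∈ Icc a b → t ∈ Icc a b → s ≤ t →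
      eVariationOn γ (Icc s t) = ENNReal.ofReal (t - s))
    (mem : ∀ t ∈ Icc a b, γ t ∈ D) : IsArc D γ a b := by
  have edist_le : ∀ s ∈ Icc a b, ∀ t ∈ Icc a b, s ≤ t → edist (γ s) (γ t) ≤ 1 * edist s t := by
    intro s hs t ht hst
    calc edist (γ s) (γ t) ≤ eVariationOn γ (Icc s t) :=
          eVariationOn.edist_le γ ⟨le_rfl, hst⟩ ⟨hst, le_rfl⟩
      _ = ENNReal.ofReal (t - s) := unit s t hs ht hst
      _ = 1 * edist s t := by
          rw [one_mul, edist_dist, Real.dist_eq, abs_of_nonpos (by linarith), neg_sub]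
  refine ⟨hab, fun s hs t ht => ?_, unit, mem⟩
  rcases le_total s t with hst | hts
  · exact edist_le s hs t ht hst
  · rw [edist_comm (γ s), edist_comm s]
    exact edist_le t ht s hs hts

lemma IsArc.restrict (h : IsArc D γ a b) (hs : s ∈ Icc a b) (ht : t ∈ Icc a b) (hst : s ≤ t) :
    IsArc D γ s t :=
  have hsub : Icc s t ⊆ Icc a b := Icc_subset_Icc hs.1 ht.2
  ⟨hst, h.lip.mono hsub, fun u v hu hv => h.unit u v (hsub hu) (hsub hv),
    fun u hu => h.mem u (hsub hu)⟩

lemma IsArc.comp_add_right (h : IsArc D γ a b) (c : ℝ) :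
    IsArc D (fun u => γ (u + c)) (a - c) (b - c) := by
  refine .of_eVariationOn (by linarith [h.le]) (fun u v hu hv huv => ?_)
    fun u hu => h.mem _ ⟨by linarith [hu.1], by linarith [hu.2]⟩
  rw [eVariationOn_comp_add_right, h.unit _ _ ⟨by linarith [hu.1], by linarith [hu.2]⟩
    ⟨by linarith [hv.1], by linarith [hv.2]⟩ (by linarith), add_sub_add_right_eq_sub]

lemma IsArc.reverse (h : IsArc D γ a b) : IsArc D (fun u => γ (a + b - u)) a b := by
  refine .of_eVariationOn h.le (fun u v hu hv huv => ?_)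
    fun u hu => h.mem _ ⟨by linarith [hu.2], by linarith [hu.1]⟩
  rw [eVariationOn_comp_const_sub, h.unit _ _ ⟨by linarith [hv.2], by linarith [hv.1]⟩
    ⟨by linarith [hu.2], by linarith [hu.1]⟩ (by linarith), sub_sub_sub_cancel_left]

def joinAt {α : Type*} (f g : ℝ → α) (b : ℝ) : ℝ → α := fun u => if u ≤ b then f u else g u

lemma joinAt_eqOn_left {α : Type*} {f g : ℝ → α} : EqOn (joinAt f g b) f (Iic b) :=
  fun _ hu => if_pos hu

lemma joinAt_eqOn_right {α : Type*} {f g : ℝ → α} (hb : f b = g b) :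
    EqOn (joinAt f g b) g (Ici b) := by
  intro u hu
  by_cases h : u ≤ b
  · rw [joinAt_eqOn_left h, le_antisymm h hu, hb]
  · exact if_neg h

lemma isArc_joinAt (hγ : IsArc D γ a b) (hδ : IsArc D δ b c) (hb : γ b = δ b) :
    IsArc D (joinAt γ δ b) a c := by
  have left : ∀ u v, a ≤ u → u ≤ v → v ≤ b →
      eVariationOn (joinAt γ δ b) (Icc u v) = ENNReal.ofReal (v - u) := fun u v hau huv hvb => by
    rw [eVariationOn.eq_of_eqOn (joinAt_eqOn_left.mono fun _ hx => hx.2.trans hvb)]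
    exact hγ.unit u v ⟨hau, huv.trans hvb⟩ ⟨hau.trans huv, hvb⟩ huv
  have right : ∀ u v, b ≤ u → u ≤ v → v ≤ c →
      eVariationOn (joinAt γ δ b) (Icc u v) = ENNReal.ofReal (v - u) := fun u v hbu huv hvc => by
    rw [eVariationOn.eq_of_eqOn ((joinAt_eqOn_right hb).mono fun _ hx => hbu.trans hx.1)]
    exact hδ.unit u v ⟨hbu, huv.trans hvc⟩ ⟨hbu.trans huv, hvc⟩ huv
  refine .of_eVariationOn (hγ.le.trans hδ.le) (fun u v hu hv huv => ?_) fun u hu => ?_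
  · rcases le_total v b with hvb | hbv
    · exact left u v hu.1 huv hvb
    rcases le_total b u with hbu | hub
    · exact right u v hbu huv hv.2
    have split := eVariationOn.Icc_add_Icc (joinAt γ δ b) hub hbv (mem_univ b)
    simp only [univ_inter] at split
    rw [← split, left u b hu.1 hub le_rfl, right b v le_rfl hbv hv.2,
      ← ENNReal.ofReal_add (by linarith) (by linarith), sub_add_sub_cancel']
  · rcases le_total u b with hub | hbu
    · rw [joinAt_eqOn_left hub]
      exact hγ.mem u ⟨hu.1, hub⟩
    · rw [joinAt_eqOn_right hb hbu]
      exact hδ.mem u ⟨hbu, hu.2⟩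

lemma dB_pos (hDo : IsOpen D) (hDc : Dᶜ.Nonempty) {z : E} (hz : z ∈ D) : 0 < dB D z :=
  (hDo.isClosed_compl.notMem_iff_infDist_pos hDc).1 fun h => h hz

lemma qhLen_nonneg (D : Set E) (γ : ℝ → E) (hab : a ≤ b) : 0 ≤ qhLen D γ a b :=
  intervalIntegral.integral_nonneg hab fun _ _ => one_div_nonneg.2 infDist_nonneg

lemma qhLen_comp_add_right (D : Set E) (γ : ℝ → E) (c u v : ℝ) :
    qhLen D (fun x => γ (x + c)) u v = qhLen D γ (u + c) (v + c) :=
  intervalIntegral.integral_comp_add_right (fun x => 1 / dB D (γ x)) c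

lemma qhLen_comp_const_sub (D : Set E) (γ : ℝ → E) (c u v : ℝ) :
    qhLen D (fun x => γ (c - x)) u v = qhLen D γ (c - v) (c - u) :=
  intervalIntegral.integral_comp_sub_left (fun x => 1 / dB D (γ x)) c

lemma IsArc.intervalIntegrable (hDo : IsOpen D) (hDc : Dᶜ.Nonempty) (h : IsArc D γ a b)
    (hs : s ∈ Icc a b) (ht : t ∈ Icc a b) :
    IntervalIntegrable (fun u => 1 / dB D (γ u)) volume s t := by
  refine ContinuousOn.intervalIntegrable (ContinuousOn.mono ?_ (uIcc_subset_Icc hs ht))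
  refine continuousOn_const.div ((continuous_infDist_pt Dᶜ).comp_continuousOn h.lip.continuousOn)
    fun u hu => (dB_pos hDo hDc (h.mem u hu)).ne'

lemma IsArc.qhLen_add (hDo : IsOpen D) (hDc : Dᶜ.Nonempty) (h : IsArc D γ a b) {u : ℝ}
    (hs : s ∈ Icc a b) (ht : t ∈ Icc a b) (hu : u ∈ Icc a b) :
    qhLen D γ s t + qhLen D γ t u = qhLen D γ s u :=
  intervalIntegral.integral_add_adjacent_intervals
    (h.intervalIntegrable hDo hDc hs ht) (h.intervalIntegrable hDo hDc ht hu)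

lemma IsArc.qhLen_le (hDo : IsOpen D) (hDc : Dᶜ.Nonempty) (h : IsArc D γ a b)
    (hs : s ∈ Icc a b) (ht : t ∈ Icc a b) :
    qhLen D γ s t ≤ qhLen D γ a b := by
  have ha : a ∈ Icc a b := ⟨le_rfl, h.le⟩
  have hb : b ∈ Icc a b := ⟨h.le, le_rfl⟩
  have := h.qhLen_add hDo hDc ha hs hb
  have := h.qhLen_add hDo hDc hs ht hb
  linarith [qhLen_nonneg D γ hs.1, qhLen_nonneg D γ ht.2]

lemma qhLen_joinAt (hDo : IsOpen D) (hDc : Dᶜ.Nonempty) (hγ : IsArc D γ a b)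
    (hδ : IsArc D δ b c) (hb : γ b = δ b) :
    qhLen D (joinAt γ δ b) a c = qhLen D γ a b + qhLen D δ b c := by
  have hab := hγ.le
  have hbc := hδ.le
  rw [← (isArc_joinAt hγ hδ hb).qhLen_add hDo hDc ⟨le_rfl, hab.trans hbc⟩ ⟨hab, hbc⟩
    ⟨hab.trans hbc, le_rfl⟩]
  congr 1 <;> refine intervalIntegral.integral_congr fun u hu => ?_
  · rw [uIcc_of_le hab] at hu
    simp only [joinAt_eqOn_left hu.2]
  · rw [uIcc_of_le hbc] at hu
    simp only [joinAt_eqOn_right hb hu.1]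

def qhLengths (D : Set E) (x y : E) : Set ℝ :=
  { L : ℝ | ∃ T : ℝ, ∃ γ : ℝ → E,
    IsArc D γ 0 T ∧ γ 0 = x ∧ γ T = y ∧ L = qhLen D γ 0 T }

lemma qhDist_eq_sInf (D : Set E) (x y : E) : qhDist D x y = sInf (qhLengths D x y) := rfl

lemma nonneg_of_mem_qhLengths {x y : E} {L : ℝ} (hL : L ∈ qhLengths D x y) : 0 ≤ L := by
  obtain ⟨T, γ, hγ, -, -, rfl⟩ := hL
  exact qhLen_nonneg D γ hγ.le

lemma qhDist_nonneg (D : Set E) (x y : E) : 0 ≤ qhDist D x y :=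
  Real.sInf_nonneg fun _ => nonneg_of_mem_qhLengths

lemma qhDist_le_of_mem {x y : E} {L : ℝ} (hL : L ∈ qhLengths D x y) : qhDist D x y ≤ L :=
  csInf_le ⟨0, fun _ => nonneg_of_mem_qhLengths⟩ hL

lemma IsArc.qhLen_mem_qhLengths (h : IsArc D γ a b) :
    qhLen D γ a b ∈ qhLengths D (γ a) (γ b) := by
  refine ⟨b - a, fun u => γ (u + a), by simpa using h.comp_add_right a, by simp, by simp, ?_⟩
  rw [qhLen_comp_add_right, zero_add, sub_add_cancel]

lemma IsArc.qhLengths_nonempty (h : IsArc D γ a b) : (qhLengths D (γ a) (γ b)).Nonempty :=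
  ⟨_, h.qhLen_mem_qhLengths⟩

lemma IsArc.qhDist_le_qhLen (h : IsArc D γ a b) : qhDist D (γ a) (γ b) ≤ qhLen D γ a b :=
  qhDist_le_of_mem h.qhLen_mem_qhLengths

lemma qhLengths_subset_swap (D : Set E) (x y : E) : qhLengths D x y ⊆ qhLengths D y x := by
  rintro L ⟨T, γ, hγ, rfl, rfl, rfl⟩
  have hrev := hγ.reverse.qhLen_mem_qhLengths
  simp only [zero_add, sub_zero, sub_self, qhLen_comp_const_sub] at hrev
  exact hrev

lemma qhLengths_comm (D : Set E) (x y : E) : qhLengths D x y = qhLengths D y x :=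
  (qhLengths_subset_swap D x y).antisymm (qhLengths_subset_swap D y x)

lemma qhDist_comm (D : Set E) (x y : E) : qhDist D x y = qhDist D y x := by
  rw [qhDist_eq_sInf, qhLengths_comm]
  rfl

lemma add_mem_qhLengths (hDo : IsOpen D) (hDc : Dᶜ.Nonempty) {x y z : E} {L₁ L₂ : ℝ}
    (h₁ : L₁ ∈ qhLengths D x y) (h₂ : L₂ ∈ qhLengths D y z) : L₁ + L₂ ∈ qhLengths D x z := by
  obtain ⟨S, γ, hγ, rfl, hγS, rfl⟩ := h₁
  obtain ⟨T, δ, hδ, hδ0, rfl, rfl⟩ := h₂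
  have hδ' : IsArc D (fun u => δ (u + -S)) S (S + T) := by
    convert hδ.comp_add_right (-S) using 1 <;> ring
  have hS : γ S = δ (S + -S) := by rw [hγS, add_neg_cancel, hδ0]
  have hjoin := (isArc_joinAt hγ hδ' hS).qhLen_mem_qhLengths
  rwa [qhLen_joinAt hDo hDc hγ hδ' hS, qhLen_comp_add_right, add_neg_cancel, add_neg_cancel_comm,
    joinAt_eqOn_left (show (0 : ℝ) ≤ S from hγ.le),
    joinAt_eqOn_right hS (le_add_of_nonneg_right hδ.le), add_neg_cancel_comm] at hjoin

lemma qhLengths_nonempty_trans (hDo : IsOpen D) (hDc : Dᶜ.Nonempty) {x y z : E}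
    (hxy : (qhLengths D x y).Nonempty) (hyz : (qhLengths D y z).Nonempty) :
    (qhLengths D x z).Nonempty :=
  ⟨_, add_mem_qhLengths hDo hDc hxy.some_mem hyz.some_mem⟩

/-- Without the nonemptiness hypotheses this fails, since `sInf ∅ = 0`. -/
lemma qhDist_triangle (hDo : IsOpen D) (hDc : Dᶜ.Nonempty) {x y z : E}
    (hxy : (qhLengths D x y).Nonempty) (hyz : (qhLengths D y z).Nonempty) :
    qhDist D x z ≤ qhDist D x y + qhDist D y z := by
  refine le_of_forall_pos_le_add fun ε hε => ?_
  obtain ⟨L₁, hL₁, hL₁ε⟩ := Real.lt_sInf_add_pos hxy (half_pos hε)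
  obtain ⟨L₂, hL₂, hL₂ε⟩ := Real.lt_sInf_add_pos hyz (half_pos hε)
  have := qhDist_le_of_mem (add_mem_qhLengths hDo hDc hL₁ hL₂)
  rw [qhDist_eq_sInf D x y, qhDist_eq_sInf D y z]
  linarith

lemma IsShort.mono {ε ε' : ℝ} (h : IsShort D ε γ a b) (hε : ε ≤ ε') : IsShort D ε' γ a b :=
  ⟨h.1, fun s t hs ht hst => (h.2 s t hs ht hst).trans (by linarith)⟩

lemma IsShort.restrict {ε : ℝ} (h : IsShort D ε γ a b) (hs : s ∈ Icc a b) (ht : t ∈ Icc a b)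
    (hst : s ≤ t) : IsShort D ε γ s t :=
  have hsub : Icc s t ⊆ Icc a b := Icc_subset_Icc hs.1 ht.2
  ⟨h.1.restrict hs ht hst, fun u v hu hv => h.2 u v (hsub hu) (hsub hv)⟩

lemma IsShort.reverse {ε : ℝ} (h : IsShort D ε γ a b) :
    IsShort D ε (fun u => γ (a + b - u)) a b := by
  refine ⟨h.1.reverse, fun u v hu hv huv => ?_⟩
  rw [qhLen_comp_const_sub, qhDist_comm]
  exact h.2 _ _ ⟨by linarith [hv.2], by linarith [hv.1]⟩
    ⟨by linarith [hu.2], by linarith [hu.1]⟩ (by linarith)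

lemma IsArc.isShort_of_qhLen_le (hDo : IsOpen D) (hDc : Dᶜ.Nonempty) {ε : ℝ}
    (h : IsArc D γ a b) (hlen : qhLen D γ a b ≤ qhDist D (γ a) (γ b) + ε) :
    IsShort D ε γ a b := by
  refine ⟨h, fun s t hs ht hst => ?_⟩
  have ha : a ∈ Icc a b := ⟨le_rfl, h.le⟩
  have hb : b ∈ Icc a b := ⟨h.le, le_rfl⟩
  have has := h.restrict ha hs hs.1
  have hst' := h.restrict hs ht hst
  have htb := h.restrict ht hb ht.2
  have split₁ := h.qhLen_add hDo hDc ha hs hb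
  have split₂ := h.qhLen_add hDo hDc hs ht hb
  have tri₁ := qhDist_triangle hDo hDc has.qhLengths_nonempty
    (qhLengths_nonempty_trans hDo hDc hst'.qhLengths_nonempty htb.qhLengths_nonempty)
  have tri₂ := qhDist_triangle hDo hDc hst'.qhLengths_nonempty htb.qhLengths_nonempty
  linarith [has.qhDist_le_qhLen, htb.qhDist_le_qhLen]

lemma IsLamCurve.isShort (hDo : IsOpen D) (hDc : Dᶜ.Nonempty) {lam : ℝ} (hlam : 0 ≤ lam)
    (h : IsLamCurve D lam γ a b) : IsShort D lam γ a b := by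
  obtain ⟨harc, hqg⟩ := h
  refine harc.isShort_of_qhLen_le hDo hDc
    ((hqg a b ⟨le_rfl, harc.le⟩ ⟨harc.le, le_rfl⟩ harc.le).trans ?_)
  have hK := qhDist_nonneg D (γ a) (γ b)
  set K := qhDist D (γ a) (γ b)
  rcases hK.eq_or_lt with hK | hK
  · rw [← hK, mul_zero]
    linarith
  · calc cLam D lam (γ a) (γ b) * K ≤ (1 + lam / (2 * K)) * K :=
          mul_le_mul_of_nonneg_right (min_le_left _ _) hK.le
      _ = K + lam / 2 := by field_simp
      _ ≤ K + lam := by linarith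

lemma exists_isShort_of_qhLengths_nonempty (hDo : IsOpen D) (hDc : Dᶜ.Nonempty) {x y : E} {ε : ℝ}
    (hxy : (qhLengths D x y).Nonempty) (hε : 0 < ε) :
    ∃ T α, IsShort D ε α 0 T ∧ α 0 = x ∧ α T = y := by
  obtain ⟨L, ⟨T, α, hα, rfl, rfl, rfl⟩, hlen⟩ := Real.lt_sInf_add_pos hxy hε
  exact ⟨T, α, hα.isShort_of_qhLen_le hDo hDc hlen.le, rfl, rfl⟩

lemma IsShort.qhDist_endpoint_le {ε : ℝ} (hDo : IsOpen D) (hDc : Dᶜ.Nonempty)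
    (hα : IsShort D ε γ a b) (hs : s ∈ Icc a b) {w : E} (hw : (qhLengths D w (γ s)).Nonempty) :
    qhDist D w (γ b) ≤ qhDist D w (γ s) + qhDist D (γ a) (γ b) + ε := by
  have hsb := hα.1.restrict hs ⟨hα.1.le, le_rfl⟩ hs.2
  calc qhDist D w (γ b) ≤ qhDist D w (γ s) + qhDist D (γ s) (γ b) :=
        qhDist_triangle hDo hDc hw hsb.qhLengths_nonempty
    _ ≤ qhDist D w (γ s) + qhLen D γ s b := by gcongr; exact hsb.qhDist_le_qhLen
    _ ≤ qhDist D w (γ s) + qhLen D γ a b := by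
        gcongr; exact hα.1.qhLen_le hDo hDc hs ⟨hα.1.le, le_rfl⟩
    _ ≤ qhDist D w (γ s) + qhDist D (γ a) (γ b) + ε := by
        linarith [hα.2 a b ⟨le_rfl, hα.1.le⟩ ⟨hα.1.le, le_rfl⟩ hα.1.le]

end

theorem stmt8_general
    (D : Set E) (hD : IsProperDomain D) (μ₀ ρ₀ lam τ : ℝ)
    (hlam₀ : 0 < lam) (hlamρ : lam ≤ ρ₀)
    (hRips : IsRips D μ₀ ρ₀)
    (γ₁ : ℝ → E) (a₁ b₁ : ℝ) (hγ₁ : IsLamCurve D lam γ₁ a₁ b₁)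
    (γ₂ : ℝ → E) (a₂ b₂ : ℝ) (hγ₂ : IsLamCurve D lam γ₂ a₂ b₂)
    (s₁ t₁ s₂ t₂ : ℝ)
    (hs₁ : s₁ ∈ Set.Icc a₁ b₁) (ht₁ : t₁ ∈ Set.Icc a₁ b₁) (h₁ : s₁ ≤ t₁)
    (hs₂ : s₂ ∈ Set.Icc a₂ b₂) (ht₂ : t₂ ∈ Set.Icc a₂ b₂) (h₂ : s₂ ≤ t₂)
    (hx : γ₁ s₁ = γ₂ s₂)
    (hτ : qhDist D (γ₁ t₁) (γ₂ t₂) ≤ τ) :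
    ∀ w ∈ Set.Icc s₁ t₁, ∃ u ∈ Set.Icc s₂ t₂,
      qhDist D (γ₁ w) (γ₂ u) ≤ μ₀ + 2 * lam + τ := by
  obtain ⟨hDo, -, hDc⟩ := hD
  have side₁ : IsShort D lam γ₁ s₁ t₁ := (hγ₁.isShort hDo hDc hlam₀.le).restrict hs₁ ht₁ h₁
  have side₃ : IsShort D lam (fun u => γ₂ (s₂ + t₂ - u)) s₂ t₂ :=
    ((hγ₂.isShort hDo hDc hlam₀.le).restrict hs₂ ht₂ h₂).reverse
  have hyz : (qhLengths D (γ₁ t₁) (γ₂ t₂)).Nonempty := by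
    refine qhLengths_nonempty_trans hDo hDc (y := γ₁ s₁) ?_
      (hx ▸ (hγ₂.1.restrict hs₂ ht₂ h₂).qhLengths_nonempty)
    rw [qhLengths_comm]
    exact side₁.1.qhLengths_nonempty
  obtain ⟨T, α, side₂, hα0, hαT⟩ := exists_isShort_of_qhLengths_nonempty hDo hDc hyz hlam₀
  have hRipsTriangle := hRips γ₁ α _ s₁ t₁ 0 T s₂ t₂ (side₁.mono hlamρ) (side₂.mono hlamρ)
    (side₃.mono hlamρ) hα0.symm (by simp [hαT]) (by simp [hx])
  intro w hw
  obtain ⟨s, ⟨hs, hws⟩ | ⟨hs, hws⟩⟩ := hRipsTriangle.1 w hw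
  · have hw_α : (qhLengths D (γ₁ w) (α s)).Nonempty := by
      refine qhLengths_nonempty_trans hDo hDc (y := α 0)
        (hα0 ▸ (side₁.1.restrict hw ⟨h₁, le_rfl⟩ hw.2).qhLengths_nonempty) ?_
      exact (side₂.1.restrict ⟨le_rfl, side₂.1.le⟩ hs hs.1).qhLengths_nonempty
    refine ⟨t₂, ⟨h₂, le_rfl⟩, ?_⟩
    have := side₂.qhDist_endpoint_le hDo hDc hs hw_α
    rw [hα0, hαT] at this
    linarith
  · have hτ₀ := (qhDist_nonneg D _ _).trans hτ
    exact ⟨s₂ + t₂ - s, ⟨by linarith [hs.2], by linarith [hs.1]⟩, hws.trans (by linarith)⟩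

/-- In a `(μ₀,ρ₀)`-Rips space, if two `λ`-curves emanate from a
common point `x`, with endpoints `y` (on `γ₁`) and `z` (on `γ₂`) satisfying
`k_D(y,z) ≤ τ`, then every point of `γ₁[x,y]` lies within `μ₀ + 2λ + τ` of
`γ₂[x,z]`. -/
theorem stmt8 [NormedSpace ℝ E] [CompleteSpace E]
    (D : Set E) (hD : IsProperDomain D) (μ₀ ρ₀ lam τ : ℝ)
    (hlam₀ : 0 < lam) (hlam₁ : lam ≤ 1 / 2) (hlamρ : lam ≤ ρ₀)
    (hRips : IsRips D μ₀ ρ₀)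
    (γ₁ : ℝ → E) (a₁ b₁ : ℝ) (hγ₁ : IsLamCurve D lam γ₁ a₁ b₁)
    (γ₂ : ℝ → E) (a₂ b₂ : ℝ) (hγ₂ : IsLamCurve D lam γ₂ a₂ b₂)
    (s₁ t₁ s₂ t₂ : ℝ)
    (hs₁ : s₁ ∈ Set.Icc a₁ b₁) (ht₁ : t₁ ∈ Set.Icc a₁ b₁) (h₁ : s₁ ≤ t₁)
    (hs₂ : s₂ ∈ Set.Icc a₂ b₂) (ht₂ : t₂ ∈ Set.Icc a₂ b₂) (h₂ : s₂ ≤ t₂)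
    (hx : γ₁ s₁ = γ₂ s₂)
    (hτ : qhDist D (γ₁ t₁) (γ₂ t₂) ≤ τ) :
    ∀ w ∈ Set.Icc s₁ t₁, ∃ u ∈ Set.Icc s₂ t₂,
      qhDist D (γ₁ w) (γ₂ u) ≤ μ₀ + 2 * lam + τ :=
  stmt8_general D hD μ₀ ρ₀ lam τ hlam₀ hlamρ hRips γ₁ a₁ b₁ hγ₁ γ₂ a₂ b₂ hγ₂ s₁ t₁ s₂ t₂ hs₁ ht₁ h₁
    hs₂ ht₂ h₂ hx hτ

end
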